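/- Let h : ℝ² → ℝ be continuous and satisfy conditions (h1)–(h4). Then the rotation number function is surjective on h-minimal configurations: for every α ∈ ℝ there exists an h-minimal configuration x = (x_i)_{i∈ℤ} with lim_{n→+∞} x_n/n = α. -/

import Mathlib

open Filter Topology MeasureTheory

/-- The finite segment of `x` between indices `j` and `k` is `h`-minimal. -/
def IsMinSegment (h : ℝ → ℝ → ℝ) (j k : ℤ) (x : ℤ → ℝ) : Prop :=
  ∀ y : ℤ → ℝ, y j = x j → y k = x k →
    ∑ i ∈ Finset.Ico j k, h (x i) (x (i + 1)) ≤ ∑ i ∈ Finset.Ico j k, h (y i) (y (i + 1))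

/-- A bi-infinite configuration is `h`-minimal if every finite segment of it is minimal. -/
def MinimalConfig (h : ℝ → ℝ → ℝ) (x : ℤ → ℝ) : Prop :=
  ∀ j k : ℤ, j < k → IsMinSegment h j k x

/-- The segment `(a, b, c)` is `h`-minimal (endpoints `a`, `c` fixed, middle point varies). -/
def MinTriple (h : ℝ → ℝ → ℝ) (a b c : ℝ) : Prop :=
  ∀ m : ℝ, h a b + h b c ≤ h a m + h m c

/-- Condition (h1): periodicity. -/
def CondH1 (h : ℝ → ℝ → ℝ) : Prop := ∀ x x' : ℝ, h (x + 1) (x' + 1) = h x x'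

/-- Condition (h2): `h (x, x+ξ) → +∞` as `|ξ| → ∞`, uniformly in `x`. -/
def CondH2 (h : ℝ → ℝ → ℝ) : Prop :=
  ∀ M : ℝ, ∃ R : ℝ, ∀ x ξ : ℝ, R ≤ |ξ| → M ≤ h x (x + ξ)

/-- Condition (h3). -/
def CondH3 (h : ℝ → ℝ → ℝ) : Prop :=
  ∀ x ξ x' ξ' : ℝ, x < ξ → x' < ξ' → h x x' + h ξ ξ' < h x ξ' + h ξ x'

/-- Condition (h4). -/
def CondH4 (h : ℝ → ℝ → ℝ) : Prop :=
  ∀ xb x x' ξb ξ' : ℝ, MinTriple h xb x x' → MinTriple h ξb x ξ' →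
    (xb ≠ ξb ∨ x' ≠ ξ') → (xb - ξb) * (x' - ξ') < 0

/-- Condition (h5). -/
def CondH5 (h : ℝ → ℝ → ℝ) : Prop :=
  ∃ ρ : ℝ → ℝ → ℝ, Continuous (Function.uncurry ρ) ∧ (∀ s s' : ℝ, 0 < ρ s s') ∧
    ∀ x ξ x' ξ' : ℝ, x < ξ → x' < ξ' →
      (∫ s in x..ξ, ∫ s' in x'..ξ', ρ s s') ≤ h x ξ' + h ξ x' - h x x' - h ξ ξ'

/-- Condition (h6θ). -/
def CondH6 (θ : ℝ) (h : ℝ → ℝ → ℝ) : Prop :=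
  (∀ x' : ℝ, ConvexOn ℝ Set.univ fun x => θ * (x - x') ^ 2 / 2 - h x x') ∧
  (∀ x : ℝ, ConvexOn ℝ Set.univ fun x' => θ * (x' - x) ^ 2 / 2 - h x x')

/-! For each `q ≥ 2` take a configuration minimizing the action over one period among the
`(⌊q α⌋, q)`-periodic ones; it exists by coercivity (h2) and compactness, and it minimizes every
segment of length at most `q`. By (h3) two such minimizers cannot cross and by (h4) they cannot
touch, so each is ordered with respect to its integer translates `x (· - a) + b`, which forces
`|x i - x 0 - i ⌊q α⌋ / q| ≤ 1`. Normalizing `x 0 ∈ [0, 1]`, a pointwise convergent subsequence as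
`q → ∞` yields a minimal configuration with `|x i - x 0 - i α| ≤ 1`, hence rotation number `α`. -/

section BangertConditions

variable {h : ℝ → ℝ → ℝ}

theorem CondH1.apply_add_intCast (h1 : CondH1 h) (n : ℤ) (x x' : ℝ) :
    h (x + n) (x' + n) = h x x' := by
  have hper : Function.Periodic (fun t : ℝ => h (x + t) (x' + t)) 1 := fun t => by
    simpa only [add_assoc] using h1 (x + t) (x' + t)
  simpa using hper.int_mul_eq n

theorem CondH2.exists_forall_le (h2 : CondH2 h) (hcont : Continuous (Function.uncurry h))
    (h1 : CondH1 h) : ∃ c, ∀ a b, c ≤ h a b := by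
  obtain ⟨R, hR⟩ := h2 0
  have hg : Continuous fun z : ℝ × ℝ => h z.1 (z.1 + z.2) :=
    hcont.comp (continuous_fst.prodMk (continuous_fst.add continuous_snd))
  obtain ⟨c, hc⟩ := ((isCompact_Icc (a := (0 : ℝ)) (b := 1)).prod
    (isCompact_Icc (a := -R) (b := R))).bddBelow_image hg.continuousOn
  refine ⟨min c 0, fun a b => ?_⟩
  have hab : h a b = h (Int.fract a) (Int.fract a + (b - a)) := by
    rw [← h1.apply_add_intCast ⌊a⌋ (Int.fract a), Int.fract_add_floor]
    congr 1
    rw [Int.fract]; ring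
  rw [hab]
  rcases le_or_gt R |b - a| with hξ | hξ
  · exact (min_le_right _ _).trans (hR _ _ hξ)
  · refine (min_le_left _ _).trans (hc ⟨(Int.fract a, b - a), ⟨?_, ?_⟩, rfl⟩)
    · exact ⟨Int.fract_nonneg a, (Int.fract_lt_one a).le⟩
    · exact ⟨by linarith [neg_abs_le (b - a)], by linarith [le_abs_self (b - a)]⟩

end BangertConditions

noncomputable def segmentAction (h : ℝ → ℝ → ℝ) (j k : ℤ) (x : ℤ → ℝ) : ℝ :=
  ∑ i ∈ Finset.Ico j k, h (x i) (x (i + 1))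

section SegmentAction

variable {h : ℝ → ℝ → ℝ} {j k l : ℤ} {x y : ℤ → ℝ}

theorem segmentAction_add_segmentAction (hjk : j ≤ k) (hkl : k ≤ l) :
    segmentAction h j k x + segmentAction h k l x = segmentAction h j l x := by
  rw [segmentAction, segmentAction, segmentAction, ← Finset.Ico_union_Ico_eq_Ico hjk hkl,
    Finset.sum_union (Finset.Ico_disjoint_Ico_consecutive j k l)]

theorem segmentAction_self_add_one : segmentAction h j (j + 1) x = h (x j) (x (j + 1)) := by
  rw [segmentAction, Finset.Ico_add_one_right_eq_Icc, Finset.Icc_self, Finset.sum_singleton]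

theorem segmentAction_congr (hxy : ∀ i ∈ Finset.Icc j k, x i = y i) :
    segmentAction h j k x = segmentAction h j k y := by
  refine Finset.sum_congr rfl fun i hi => ?_
  obtain ⟨hji, hik⟩ := Finset.mem_Ico.1 hi
  rw [hxy i (Finset.mem_Icc.2 ⟨hji, hik.le⟩), hxy (i + 1) (Finset.mem_Icc.2 ⟨by omega, hik⟩)]

theorem segmentAction_add_intCast (h1 : CondH1 h) (n : ℤ) :
    segmentAction h j k (fun i => x i + n) = segmentAction h j k x :=
  Finset.sum_congr rfl fun _ _ => h1.apply_add_intCast n _ _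

theorem segmentAction_comp_sub (a : ℤ) :
    segmentAction h j k (fun i => x (i - a)) = segmentAction h (j - a) (k - a) x := by
  rw [segmentAction, segmentAction, ← Finset.sum_Ico_add_right_sub_eq (j - a) (k - a) a]
  simp only [sub_add_cancel]
  exact Finset.sum_congr rfl fun i _ => by rw [sub_add_eq_add_sub]

theorem continuous_segmentAction (hcont : Continuous (Function.uncurry h)) (j k : ℤ) :
    Continuous (segmentAction h j k) :=
  continuous_finsetSum _ fun i _ =>
    hcont.comp (f := fun x : ℤ → ℝ => (x i, x (i + 1))) (by fun_prop)

theorem CondH3.min_add_max_lt (h3 : CondH3 h) {a b a' b' : ℝ} (hab : (a - b) * (a' - b') < 0) :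
    h (min a b) (min a' b') + h (max a b) (max a' b') < h a a' + h b b' := by
  rcases mul_neg_iff.1 hab with ⟨hb, hb'⟩ | ⟨ha, ha'⟩
  · rw [min_eq_right (by linarith), min_eq_left (by linarith), max_eq_left (by linarith),
      max_eq_right (by linarith)]
    linarith [h3 b a a' b' (by linarith) (by linarith)]
  · rw [min_eq_left (by linarith), min_eq_right (by linarith), max_eq_right (by linarith),
      max_eq_left (by linarith)]
    exact h3 a b b' a' (by linarith) (by linarith)

theorem min_add_max_of_mul_nonneg {a b a' b' : ℝ} (hab : 0 ≤ (a - b) * (a' - b')) :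
    h (min a b) (min a' b') + h (max a b) (max a' b') = h a a' + h b b' := by
  rcases le_total a b with hab₁ | hab₁ <;> rcases le_total a' b' with hab₂ | hab₂
  · rw [min_eq_left hab₁, min_eq_left hab₂, max_eq_right hab₁, max_eq_right hab₂]
  · rw [min_eq_left hab₁, min_eq_right hab₂, max_eq_right hab₁, max_eq_left hab₂]
    rcases mul_eq_zero.1 (le_antisymm (mul_nonpos_of_nonpos_of_nonneg (by linarith) (by linarith))
      hab) with h0 | h0 <;> simp only [sub_eq_zero.1 h0, add_comm]
  · rw [min_eq_right hab₁, min_eq_left hab₂, max_eq_left hab₁, max_eq_right hab₂]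
    rcases mul_eq_zero.1 (le_antisymm (mul_nonpos_of_nonneg_of_nonpos (by linarith) (by linarith))
      hab) with h0 | h0 <;> simp only [sub_eq_zero.1 h0, add_comm]
  · rw [min_eq_right hab₁, min_eq_right hab₂, max_eq_left hab₁, max_eq_left hab₂, add_comm]

theorem CondH3.min_add_max_le (h3 : CondH3 h) (a b a' b' : ℝ) :
    h (min a b) (min a' b') + h (max a b) (max a' b') ≤ h a a' + h b b' := by
  rcases lt_or_ge ((a - b) * (a' - b')) 0 with hab | hab
  · exact (h3.min_add_max_lt hab).le
  · exact (min_add_max_of_mul_nonneg hab).le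

theorem CondH3.segmentAction_min_add_max_le (h3 : CondH3 h) (j k : ℤ) (x y : ℤ → ℝ) :
    segmentAction h j k (fun i => min (x i) (y i)) + segmentAction h j k (fun i => max (x i) (y i))
      ≤ segmentAction h j k x + segmentAction h j k y := by
  simp only [segmentAction, ← Finset.sum_add_distrib]
  exact Finset.sum_le_sum fun i _ => h3.min_add_max_le _ _ _ _

theorem CondH3.segmentAction_min_add_max_lt (h3 : CondH3 h) {i : ℤ} (hi : i ∈ Finset.Ico j k)
    (hcross : (x i - y i) * (x (i + 1) - y (i + 1)) < 0) :
    segmentAction h j k (fun i => min (x i) (y i)) + segmentAction h j k (fun i => max (x i) (y i))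
      < segmentAction h j k x + segmentAction h j k y := by
  simp only [segmentAction, ← Finset.sum_add_distrib]
  exact Finset.sum_lt_sum (fun i _ => h3.min_add_max_le _ _ _ _) ⟨i, hi, h3.min_add_max_lt hcross⟩

end SegmentAction

def IsPeriodicConfig (p : ℤ) (q : ℕ) (x : ℤ → ℝ) : Prop :=
  ∀ i : ℤ, x (i + q) = x i + p

theorem isClosed_setOf_isPeriodicConfig (p : ℤ) (q : ℕ) :
    IsClosed {x : ℤ → ℝ | IsPeriodicConfig p q x} := by
  simp only [IsPeriodicConfig, Set.ofPred_forall]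
  exact isClosed_iInter fun i =>
    isClosed_eq (continuous_apply _) ((continuous_apply _).add continuous_const)

theorem isPeriodicConfig_linear (p : ℤ) {q : ℕ} (hq : q ≠ 0) :
    IsPeriodicConfig p q fun i => i * p / q := fun i => by
  push_cast
  field_simp

theorem exists_isPeriodicConfig_eqOn {p : ℤ} {q : ℕ} (hq : 0 < q) {w : ℤ → ℝ} {j : ℤ}
    (hw : w (j + q) = w j + p) :
    ∃ z, IsPeriodicConfig p q z ∧ ∀ i ∈ Finset.Icc j (j + q), z i = w i := by
  have hq' : (q : ℤ) ≠ 0 := by positivity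
  refine ⟨fun i => w (j + (i - j) % q) + ((i - j) / q : ℤ) * p, fun i => ?_, fun i hi => ?_⟩
  · beta_reduce
    rw [show i + q - j = i - j + 1 * q by ring, Int.add_mul_emod_self_right,
      Int.add_mul_ediv_right _ _ hq']
    push_cast
    ring
  · obtain ⟨hji, hiq⟩ := Finset.mem_Icc.1 hi
    beta_reduce
    rcases hiq.lt_or_eq with hiq | rfl
    · rw [Int.emod_eq_of_lt (by omega) (by omega), Int.ediv_eq_zero_of_lt (by omega) (by omega)]
      simp
    · simp [Int.ediv_self hq', hw]

namespace IsPeriodicConfig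

variable {h : ℝ → ℝ → ℝ} {p : ℤ} {q : ℕ} {x y : ℤ → ℝ}

theorem add_mul (hx : IsPeriodicConfig p q x) (i t : ℤ) : x (i + t * q) = x i + t * p := by
  have hper : Function.Periodic (fun t : ℤ => x (i + t * q) - t * p) 1 := fun t => by
    simp only
    rw [show i + (t + 1) * q = i + t * q + q by ring, hx]
    push_cast
    ring
  have := hper.int_mul_eq t
  simp only [Int.cast_id, mul_one, zero_mul, add_zero, Int.cast_zero, sub_zero] at this
  linarith

theorem add_const (hx : IsPeriodicConfig p q x) (b : ℝ) : IsPeriodicConfig p q fun i => x i + b :=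
  fun i => by beta_reduce; rw [hx]; ring

theorem comp_sub (hx : IsPeriodicConfig p q x) (a : ℤ) : IsPeriodicConfig p q fun i => x (i - a) :=
  fun i => by rw [← hx, sub_add_eq_add_sub]

theorem min (hx : IsPeriodicConfig p q x) (hy : IsPeriodicConfig p q y) :
    IsPeriodicConfig p q fun i => min (x i) (y i) :=
  fun i => by beta_reduce; rw [hx, hy, min_add_add_right]

theorem max (hx : IsPeriodicConfig p q x) (hy : IsPeriodicConfig p q y) :
    IsPeriodicConfig p q fun i => max (x i) (y i) :=
  fun i => by beta_reduce; rw [hx, hy, max_add_add_right]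

theorem segmentAction_eq (h1 : CondH1 h) (hx : IsPeriodicConfig p q x) (t : ℤ) :
    segmentAction h t (t + q) x = segmentAction h 0 q x := by
  have hper : Function.Periodic (fun t : ℤ => segmentAction h t (t + q) x) 1 := fun t => by
    have hbond : h (x (t + q)) (x (t + q + 1)) = h (x t) (x (t + 1)) := by
      rw [hx, add_right_comm, hx, h1.apply_add_intCast]
    have e₁ := segmentAction_add_segmentAction (h := h) (x := x) (j := t) (k := t + q)
      (l := t + q + 1) (by omega) (by omega)
    have e₂ := segmentAction_add_segmentAction (h := h) (x := x) (j := t) (k := t + 1)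
      (l := t + q + 1) (by omega) (by omega)
    rw [segmentAction_self_add_one] at e₁ e₂
    simp only [add_right_comm t 1]
    linarith
  simpa using hper.int_mul_eq t

end IsPeriodicConfig

theorem abs_sub_le_of_forall_abs_add_one_sub_le {f : ℤ → ℝ} {R : ℝ}
    (hf : ∀ i, |f (i + 1) - f i| ≤ R) (i : ℤ) : |f i - f 0| ≤ |(i : ℝ)| * R := by
  induction i using Int.induction_on with
  | zero => simp
  | succ k ih =>
    have hk : |(((k : ℤ) + 1 : ℤ) : ℝ)| = |((k : ℤ) : ℝ)| + 1 := by
      push_cast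
      rw [abs_of_nonneg (by positivity), abs_of_nonneg (by positivity)]
    rw [hk]
    linarith [abs_sub_le (f (k + 1)) (f k) (f 0), hf k]
  | pred k ih =>
    have hk : |((-(k : ℤ) - 1 : ℤ) : ℝ)| = |((-(k : ℤ) : ℤ) : ℝ)| + 1 := by
      push_cast
      rw [abs_of_nonpos (by linarith [k.cast_nonneg (α := ℝ)]), abs_neg,
        abs_of_nonneg (by positivity)]
      ring
    have hstep := hf (-k - 1)
    rw [sub_add_cancel, abs_sub_comm] at hstep
    rw [hk]
    linarith [abs_sub_le (f (-k - 1)) (f (-k)) (f 0)]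

def IsPeriodicMinimizer (h : ℝ → ℝ → ℝ) (p : ℤ) (q : ℕ) (x : ℤ → ℝ) : Prop :=
  IsPeriodicConfig p q x ∧
    ∀ y, IsPeriodicConfig p q y → segmentAction h 0 q x ≤ segmentAction h 0 q y

section Existence

variable {h : ℝ → ℝ → ℝ}

theorem le_segmentAction_sub_of_forall_le {c : ℝ} (hc : ∀ a b, c ≤ h a b) (x : ℤ → ℝ) {j i : ℤ}
    {q : ℕ} (hi : i ∈ Finset.Ico j (j + q)) :
    h (x i) (x (i + 1)) ≤ segmentAction h j (j + q) x - (q - 1) * c := by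
  have := Finset.single_le_sum (f := fun i => h (x i) (x (i + 1)) - c)
    (fun i _ => sub_nonneg.2 (hc _ _)) hi
  simp only [Finset.sum_sub_distrib, Finset.sum_const, Int.card_Ico, add_sub_cancel_left,
    Int.toNat_natCast, nsmul_eq_mul] at this
  rw [segmentAction]
  linarith

theorem isCompact_setOf_segmentAction_le (hcont : Continuous (Function.uncurry h)) (h1 : CondH1 h)
    (h2 : CondH2 h) (p : ℤ) {q : ℕ} (hq : 0 < q) (L : ℝ) :
    IsCompact {x : ℤ → ℝ | IsPeriodicConfig p q x ∧ x 0 ∈ Set.Icc 0 1 ∧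
      segmentAction h 0 q x ≤ L} := by
  obtain ⟨c, hc⟩ := h2.exists_forall_le hcont h1
  obtain ⟨R, hR⟩ := h2 (L - (q - 1) * c + 1)
  have hjump (x : ℤ → ℝ) (hx : IsPeriodicConfig p q x) (hxL : segmentAction h 0 q x ≤ L) (i : ℤ) :
      |x (i + 1) - x i| ≤ R := by
    by_contra! hi
    have hbig := hR (x i) (x (i + 1) - x i) hi.le
    rw [add_sub_cancel] at hbig
    have hsmall := le_segmentAction_sub_of_forall_le hc x (j := i) (q := q)
      (Finset.mem_Ico.2 ⟨le_rfl, by omega⟩)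
    rw [hx.segmentAction_eq h1] at hsmall
    linarith
  refine (isCompact_univ_pi fun i : ℤ => isCompact_Icc (a := -(1 + |(i : ℝ)| * R))
    (b := 1 + |(i : ℝ)| * R)).of_isClosed_subset ?_ ?_
  · exact (isClosed_setOf_isPeriodicConfig p q).inter ((isClosed_Icc.preimage
      (continuous_apply 0)).inter (isClosed_le (continuous_segmentAction hcont 0 q)
        continuous_const))
  · rintro x ⟨hx, hx0, hxL⟩ i -
    have := abs_le.1 (abs_sub_le_of_forall_abs_add_one_sub_le (hjump x hx hxL) i)
    exact ⟨by linarith [hx0.1], by linarith [hx0.2]⟩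

theorem exists_isPeriodicMinimizer (hcont : Continuous (Function.uncurry h)) (h1 : CondH1 h)
    (h2 : CondH2 h) (p : ℤ) {q : ℕ} (hq : 0 < q) :
    ∃ x, IsPeriodicMinimizer h p q x ∧ x 0 ∈ Set.Icc 0 1 := by
  have hlin := isPeriodicConfig_linear p hq.ne'
  set L := segmentAction h 0 q fun i : ℤ => i * p / q
  obtain ⟨x, ⟨hx, hx0, -⟩, hxmin⟩ := (isCompact_setOf_segmentAction_le hcont h1 h2 p hq L)
    |>.exists_isMinOn ⟨_, hlin, by simp, le_rfl⟩ (continuous_segmentAction hcont 0 q).continuousOn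
  refine ⟨x, ⟨hx, fun y hy => ?_⟩, hx0⟩
  by_cases hyL : segmentAction h 0 q y ≤ L
  · -- the integer translate of `y` starting in `[0, 1)` competes with `x`
    rw [← segmentAction_add_intCast h1 (-⌊y 0⌋) (x := y)]
    refine isMinOn_iff.1 hxmin _ ⟨hy.add_const _, ?_, by rwa [segmentAction_add_intCast h1]⟩
    beta_reduce
    rw [Int.cast_neg, ← sub_eq_add_neg, ← Int.fract]
    exact ⟨Int.fract_nonneg _, (Int.fract_lt_one _).le⟩
  · exact (isMinOn_iff.1 hxmin _ ⟨hlin, by simp, le_rfl⟩).trans (not_le.1 hyL).le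

end Existence

namespace IsPeriodicMinimizer

variable {h : ℝ → ℝ → ℝ} {p : ℤ} {q : ℕ} {x y : ℤ → ℝ}

theorem comp_sub_add (h1 : CondH1 h) (hx : IsPeriodicMinimizer h p q x) (a b : ℤ) :
    IsPeriodicMinimizer h p q fun i => x (i - a) + b := by
  refine ⟨(hx.1.comp_sub a).add_const b, fun z hz => ?_⟩
  rw [segmentAction_add_intCast h1, segmentAction_comp_sub, zero_sub, sub_eq_neg_add,
    hx.1.segmentAction_eq h1]
  exact hx.2 z hz

theorem isMinSegment (h1 : CondH1 h) (hx : IsPeriodicMinimizer h p q x) {j k : ℤ} (hjk : j < k)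
    (hkq : k ≤ j + q) : IsMinSegment h j k x := by
  intro y hyj hyk
  set w : ℤ → ℝ := fun i => if i ≤ k then y i else x i
  have hwy : ∀ i ∈ Finset.Icc j k, w i = y i := fun i hi => if_pos (Finset.mem_Icc.1 hi).2
  have hwx : ∀ i ∈ Finset.Icc k (j + q), w i = x i := fun i hi => by
    have hki := (Finset.mem_Icc.1 hi).1
    by_cases hik : i ≤ k
    · rw [hwy i (Finset.mem_Icc.2 ⟨hjk.le.trans hki, hik⟩), le_antisymm hik hki, hyk]
    · exact if_neg hik
  obtain ⟨z, hz, hzw⟩ := exists_isPeriodicConfig_eqOn (p := p) (q := q) (w := w) (j := j)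
    (by omega) <| by
      rw [hwx _ (Finset.mem_Icc.2 ⟨hkq, le_rfl⟩), hwy _ (Finset.mem_Icc.2 ⟨le_rfl, hjk.le⟩), hyj,
        hx.1]
  have key : segmentAction h j k x + segmentAction h k (j + q) x
      ≤ segmentAction h j k y + segmentAction h k (j + q) x :=
    calc segmentAction h j k x + segmentAction h k (j + q) x
        = segmentAction h 0 q x := by
          rw [segmentAction_add_segmentAction hjk.le hkq, hx.1.segmentAction_eq h1]
      _ ≤ segmentAction h 0 q z := hx.2 z hz
      _ = segmentAction h j k y + segmentAction h k (j + q) x := by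
          rw [← hz.segmentAction_eq h1 j, segmentAction_congr hzw,
            ← segmentAction_add_segmentAction hjk.le hkq, segmentAction_congr hwy,
            segmentAction_congr hwx]
  exact le_of_add_le_add_right key

theorem minTriple (h1 : CondH1 h) (hx : IsPeriodicMinimizer h p q x) (hq : 2 ≤ q) (i : ℤ) :
    MinTriple h (x (i - 1)) (x i) (x (i + 1)) := by
  have hsplit (y : ℤ → ℝ) : segmentAction h (i - 1) (i + 1) y
      = h (y (i - 1)) (y i) + h (y i) (y (i + 1)) := by
    have e := segmentAction_self_add_one (h := h) (x := y) (j := i - 1)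
    rw [sub_add_cancel] at e
    rw [← segmentAction_add_segmentAction (k := i) (by omega) (by omega), e,
      segmentAction_self_add_one]
  intro m
  have := hx.isMinSegment h1 (j := i - 1) (k := i + 1) (by omega) (by omega)
    (Function.update x i m) (by simp) (by simp)
  change segmentAction h _ _ _ ≤ segmentAction h _ _ _ at this
  simpa [hsplit] using this

theorem min (h3 : CondH3 h) (hx : IsPeriodicMinimizer h p q x) (hy : IsPeriodicMinimizer h p q y) :
    IsPeriodicMinimizer h p q fun i => min (x i) (y i) :=
  ⟨hx.1.min hy.1, fun z hz => by
    linarith [h3.segmentAction_min_add_max_le 0 q x y, hy.2 _ (hx.1.max hy.1), hx.2 z hz]⟩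

theorem sub_mul_sub_nonneg (h1 : CondH1 h) (h3 : CondH3 h) (hq : 0 < q)
    (hx : IsPeriodicMinimizer h p q x) (hy : IsPeriodicMinimizer h p q y) (i : ℤ) :
    0 ≤ (x i - y i) * (x (i + 1) - y (i + 1)) := by
  by_contra! hcross
  have := h3.segmentAction_min_add_max_lt (k := i + q) (Finset.mem_Ico.2 ⟨le_rfl, by omega⟩) hcross
  simp only [(hx.1.min hy.1).segmentAction_eq h1, (hx.1.max hy.1).segmentAction_eq h1,
    hx.1.segmentAction_eq h1, hy.1.segmentAction_eq h1] at this
  linarith [hx.2 _ (hx.1.min hy.1), hy.2 _ (hx.1.max hy.1)]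

end IsPeriodicMinimizer

theorem sign_eq_sign_of_mul_nonneg {a b : ℝ} (hab : 0 ≤ a * b) (h0 : a = 0 ↔ b = 0) :
    SignType.sign a = SignType.sign b := by
  rcases lt_trichotomy a 0 with ha | rfl | ha <;> rcases lt_trichotomy b 0 with hb | rfl | hb <;>
    simp_all [sign_neg, sign_pos] <;> nlinarith

theorem add_lt_of_forall_comp_sub_add_lt {f : ℤ → ℝ} {a : ℤ} {b : ℝ}
    (hf : ∀ j, f (j - a) + b < f j) {n : ℕ} (hn : 1 ≤ n) (j : ℤ) : f (j - n * a) + n * b < f j := by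
  induction n, hn using Nat.le_induction generalizing j with
  | base => simpa using hf j
  | succ n _ ih =>
    calc f (j - (n + 1 : ℕ) * a) + (n + 1 : ℕ) * b = f (j - a - n * a) + n * b + b := by
          push_cast; ring_nf
      _ < f (j - a) + b := by linarith [ih (j - a)]
      _ < f j := hf j

namespace IsPeriodicMinimizer

variable {h : ℝ → ℝ → ℝ} {p : ℤ} {q : ℕ} {x y : ℤ → ℝ}

/-- `min x y` is again a minimizer and passes through `x i`, so by (h4) it cannot leave `x` on
either side. -/
theorem le_adjacent_of_eq (h1 : CondH1 h) (h3 : CondH3 h) (h4 : CondH4 h) (hq : 2 ≤ q)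
    (hx : IsPeriodicMinimizer h p q x) (hy : IsPeriodicMinimizer h p q y) {i : ℤ} (hi : x i = y i) :
    x (i - 1) ≤ y (i - 1) ∧ x (i + 1) ≤ y (i + 1) := by
  have hu := (hx.min h3 hy).minTriple h1 hq i
  rw [← hi, min_self] at hu
  by_contra hne
  refine (h4 _ _ _ _ _ (hx.minTriple h1 hq i) hu ?_).not_ge
    (mul_nonneg (sub_nonneg.2 (min_le_left _ _)) (sub_nonneg.2 (min_le_left _ _)))
  rw [not_and_or, not_le, not_le] at hne
  exact hne.imp (fun hlt => by rw [min_eq_right hlt.le]; exact hlt.ne')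
    (fun hlt => by rw [min_eq_right hlt.le]; exact hlt.ne')

theorem eq_iff_eq_add_one (h1 : CondH1 h) (h3 : CondH3 h) (h4 : CondH4 h) (hq : 2 ≤ q)
    (hx : IsPeriodicMinimizer h p q x) (hy : IsPeriodicMinimizer h p q y) (i : ℤ) :
    x i = y i ↔ x (i + 1) = y (i + 1) := by
  refine ⟨fun hi => le_antisymm (hx.le_adjacent_of_eq h1 h3 h4 hq hy hi).2
    (hy.le_adjacent_of_eq h1 h3 h4 hq hx hi.symm).2, fun hi => ?_⟩
  have h₁ := (hx.le_adjacent_of_eq h1 h3 h4 hq hy hi).1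
  have h₂ := (hy.le_adjacent_of_eq h1 h3 h4 hq hx hi.symm).1
  rw [add_sub_cancel_right] at h₁ h₂
  exact le_antisymm h₁ h₂

/-- Aubry's crossing lemma. -/
theorem sign_sub_eq (h1 : CondH1 h) (h3 : CondH3 h) (h4 : CondH4 h) (hq : 2 ≤ q)
    (hx : IsPeriodicMinimizer h p q x) (hy : IsPeriodicMinimizer h p q y) (i : ℤ) :
    SignType.sign (x i - y i) = SignType.sign (x 0 - y 0) := by
  have hper : Function.Periodic (fun i => SignType.sign (x i - y i)) 1 := fun i =>
    (sign_eq_sign_of_mul_nonneg (hx.sub_mul_sub_nonneg h1 h3 (by omega) hy i) <| by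
      simp only [sub_eq_zero]; exact hx.eq_iff_eq_add_one h1 h3 h4 hq hy i).symm
  simpa using hper.int_mul_eq i

theorem le_comp_sub_add (h1 : CondH1 h) (h3 : CondH3 h) (h4 : CondH4 h) (hq : 2 ≤ q)
    (hx : IsPeriodicMinimizer h p q x) {a b : ℤ} (hab : a * p ≤ q * b) (i : ℤ) :
    x i ≤ x (i - a) + b := by
  by_contra! hlt
  have hy := hx.comp_sub_add h1 a b
  have hall : ∀ j, x (j - a) + b < x j := fun j => by
    have := (hx.sign_sub_eq h1 h3 h4 hq hy j).trans (hx.sign_sub_eq h1 h3 h4 hq hy i).symm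
    rw [sign_pos (sub_pos.2 hlt), sign_eq_one_iff, sub_pos] at this
    exact this
  have hiter := add_lt_of_forall_comp_sub_add_lt hall (n := q) (by omega) i
  have hper := hx.1.add_mul i (-a)
  rw [show i + -a * q = i - q * a by ring] at hper
  push_cast at hper hiter
  rw [hper] at hiter
  have : (a * p : ℝ) ≤ q * b := by exact_mod_cast hab
  linarith

theorem abs_sub_sub_le (h1 : CondH1 h) (h3 : CondH3 h) (h4 : CondH4 h) (hq : 2 ≤ q)
    (hx : IsPeriodicMinimizer h p q x) (i : ℤ) : |x i - x 0 - i * (p / q)| ≤ 1 := by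
  have hq' : (0 : ℝ) < q := by positivity
  set r : ℝ := i * (p / q)
  have hr : q * r = i * p := by simp only [r]; field_simp
  have hup := hx.le_comp_sub_add h1 h3 h4 hq (a := i) (b := ⌈r⌉) (by
    have : (i * p : ℝ) ≤ q * ⌈r⌉ := hr ▸ mul_le_mul_of_nonneg_left (Int.le_ceil r) hq'.le
    exact_mod_cast this) i
  have hlo := hx.le_comp_sub_add h1 h3 h4 hq (a := -i) (b := -⌊r⌋) (by
    have : (q * ⌊r⌋ : ℝ) ≤ i * p := hr ▸ mul_le_mul_of_nonneg_left (Int.floor_le r) hq'.le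
    have : q * ⌊r⌋ ≤ i * p := by exact_mod_cast this
    linarith) 0
  rw [sub_self] at hup
  rw [zero_sub, neg_neg] at hlo
  push_cast at hlo
  rw [abs_le]
  constructor <;> linarith [Int.ceil_lt_add_one r, Int.sub_one_lt_floor r]

end IsPeriodicMinimizer

theorem tendsto_intFloor_mul_div (α : ℝ) :
    Tendsto (fun q : ℕ => (⌊q * α⌋ : ℝ) / q) atTop (𝓝 α) := by
  have hfract : Tendsto (fun q : ℕ => Int.fract (q * α) / q) atTop (𝓝 0) :=
    squeeze_zero (fun q => div_nonneg (Int.fract_nonneg _) q.cast_nonneg)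
      (fun q => div_le_div_of_nonneg_right (Int.fract_lt_one _).le q.cast_nonneg)
      tendsto_one_div_atTop_nhds_zero_nat
  refine (by simpa using tendsto_const_nhds.sub hfract : Tendsto _ _ (𝓝 α)).congr' ?_
  filter_upwards [eventually_ne_atTop 0] with q hq
  rw [Int.fract, sub_div, mul_div_cancel_left₀ _ (Nat.cast_ne_zero.2 hq)]
  ring

theorem exists_tendsto_subseq_of_abs_le {ι : Type*} [Countable ι] (C : ι → ℝ) (X : ℕ → ι → ℝ)
    (hX : ∀ m i, |X m i| ≤ C i) :
    ∃ x : ι → ℝ, ∃ φ : ℕ → ℕ, StrictMono φ ∧ Tendsto (X ∘ φ) atTop (𝓝 x) := by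
  obtain ⟨x, -, φ, hφ, hlim⟩ := (isCompact_univ_pi fun i => isCompact_Icc).tendsto_subseq
    (s := Set.univ.pi fun i => Set.Icc (-C i) (C i)) fun m i _ => abs_le.1 (hX m i)
  exact ⟨x, φ, hφ, hlim⟩

theorem exists_tendsto_subseq_of_abs_sub_sub_mul_le {X : ℕ → ℤ → ℝ} {ρ : ℕ → ℝ} {α : ℝ}
    (hρ : Tendsto ρ atTop (𝓝 α)) (hX : ∀ m i, |X m i - X m 0 - i * ρ m| ≤ 1)
    (hX0 : ∀ m, X m 0 ∈ Set.Icc 0 1) :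
    ∃ x : ℤ → ℝ, ∃ φ : ℕ → ℕ, StrictMono φ ∧ Tendsto (X ∘ φ) atTop (𝓝 x) ∧
      ∀ i, |x i - x 0 - i * α| ≤ 1 := by
  obtain ⟨K, hK⟩ := hρ.abs.bddAbove_range
  obtain ⟨x, φ, hφ, hlim⟩ := exists_tendsto_subseq_of_abs_le (fun i : ℤ => 2 + |(i : ℝ)| * K) X
    fun m i => by
      have hρK : |(i : ℝ) * ρ m| ≤ |(i : ℝ)| * K :=
        abs_mul (i : ℝ) (ρ m) ▸ mul_le_mul_of_nonneg_left (hK ⟨m, rfl⟩) (abs_nonneg _)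
      have := abs_le.1 (hX m i)
      have := abs_le.1 hρK
      rw [abs_le]
      constructor <;> linarith [(hX0 m).1, (hX0 m).2]
  have hcoord (i : ℤ) : Tendsto (fun m => X (φ m) i) atTop (𝓝 (x i)) := tendsto_pi_nhds.1 hlim i
  refine ⟨x, φ, hφ, hlim, fun i => le_of_tendsto' (((hcoord i).sub (hcoord 0)).sub
    ((hρ.comp hφ.tendsto_atTop).const_mul _)).abs fun m => hX (φ m) i⟩

theorem tendsto_div_of_abs_sub_sub_mul_le {x : ℤ → ℝ} {α C : ℝ}
    (hx : ∀ i, |x i - x 0 - i * α| ≤ C) : Tendsto (fun n : ℕ => x n / n) atTop (𝓝 α) := by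
  rw [← tendsto_sub_nhds_zero_iff]
  refine squeeze_zero_norm' ?_ (tendsto_const_div_atTop_nhds_zero_nat (C + |x 0|))
  filter_upwards [eventually_ne_atTop 0] with n hn
  have hn' : (0 : ℝ) < n := by positivity
  have hxn : |x n - n * α| ≤ C + |x 0| :=
    calc |x n - n * α| = |(x n - x 0 - (n : ℤ) * α) + x 0| := by push_cast; ring_nf
      _ ≤ C + |x 0| := (abs_add_le _ _).trans (by linarith [hx n])
  have : x n / n - α = (x n - n * α) / n := by field_simp
  rw [this, norm_div, Real.norm_eq_abs, Real.norm_natCast]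
  exact div_le_div_of_nonneg_right hxn hn'.le

theorem minimalConfig_of_tendsto {h : ℝ → ℝ → ℝ} (hcont : Continuous (Function.uncurry h))
    {β : Type*} {l : Filter β} [l.NeBot] {X : β → ℤ → ℝ} {x : ℤ → ℝ} (hX : Tendsto X l (𝓝 x))
    (hmin : ∀ j k, j < k → ∀ᶠ b in l, IsMinSegment h j k (X b)) : MinimalConfig h x := by
  intro j k hjk y hyj hyk
  -- compare with the competitors `y + (X b - x)`, which have the same endpoints as `X b`
  have hY : Tendsto (fun b => y + (X b - x)) l (𝓝 y) := by
    simpa using tendsto_const_nhds.add (hX.sub_const x)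
  refine le_of_tendsto_of_tendsto ((continuous_segmentAction hcont j k).tendsto x |>.comp hX)
    ((continuous_segmentAction hcont j k).tendsto y |>.comp hY) ?_
  filter_upwards [hmin j k hjk] with b hb
  exact hb _ (by simp [hyj]) (by simp [hyk])

/-- The rotation number is surjective on minimal configurations. -/
theorem rotation_number_surjective
    (h : ℝ → ℝ → ℝ) (hcont : Continuous (Function.uncurry h))
    (h1 : CondH1 h) (h2 : CondH2 h) (h3 : CondH3 h) (h4 : CondH4 h) (α : ℝ) :
    ∃ x : ℤ → ℝ, MinimalConfig h x ∧ Tendsto (fun n : ℕ => x n / n) atTop (𝓝 α) := by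
  -- periods `q = m + 2 ≥ 2`, so that the three-point condition (h4) applies to the minimizers
  set ρ : ℕ → ℝ := fun m => (⌊((m + 2 : ℕ) : ℝ) * α⌋ : ℝ) / (m + 2 : ℕ)
  have hρ : Tendsto ρ atTop (𝓝 α) := (tendsto_intFloor_mul_div α).comp (tendsto_add_atTop_nat 2)
  choose X hX hX0 using fun m : ℕ =>
    exists_isPeriodicMinimizer hcont h1 h2 ⌊((m + 2 : ℕ) : ℝ) * α⌋ (q := m + 2) (by omega)
  obtain ⟨x, φ, hφ, hlim, hxα⟩ := exists_tendsto_subseq_of_abs_sub_sub_mul_le hρ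
    (fun m => (hX m).abs_sub_sub_le h1 h3 h4 (by omega)) hX0
  refine ⟨x, minimalConfig_of_tendsto hcont hlim fun j k hjk => ?_,
    tendsto_div_of_abs_sub_sub_mul_le hxα⟩
  filter_upwards [eventually_ge_atTop (k - j).toNat] with m hm
  exact (hX (φ m)).isMinSegment h1 hjk (by have := hφ.id_le m; simp at this; push_cast; omega)
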